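/- Let θ be a regular cardinal and α < θ an ordinal, and let a_i (i < α) be sets of regular cardinals (with ⋃_i a_i having size < its minimum). Then pcf_{θ-complete}(⋃_{i<α} a_i) = ⋃_{i<α} pcf_{θ-complete}(a_i). -/

import Mathlib

open Cardinal Set

/-- `J` is a (proper) ideal on the elements of `a`. -/
def IsIdealOn (a : Set Cardinal.{0}) (J : Set (Set ↥a)) : Prop :=
  ∅ ∈ J ∧ (∀ s t : Set ↥a, s ⊆ t → t ∈ J → s ∈ J) ∧
    (∀ s t : Set ↥a, s ∈ J → t ∈ J → s ∪ t ∈ J) ∧ Set.univ ∉ J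

/-- `J` is `θ`-complete: closed under unions of fewer than `θ` members. -/
def IsThetaComplete (θ : Cardinal.{0}) (a : Set Cardinal.{0})
    (J : Set (Set ↥a)) : Prop :=
  ∀ A : Set (Set ↥a), A ⊆ J → #A < Cardinal.lift.{1,0} θ → ⋃₀ A ∈ J

/-- `f <_J g` modulo the ideal `J`. -/
def ltJ (a : Set Cardinal.{0}) (J : Set (Set ↥a))
    (f g : ↥a → Ordinal.{0}) : Prop :=
  {x | g x ≤ f x} ∈ J

/-- `lam` is the true cofinality of `∏ a / J`. -/
def IsTcfIdeal (a : Set Cardinal.{0}) (J : Set (Set ↥a))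
    (lam : Cardinal.{0}) : Prop :=
  lam.IsRegular ∧
  ∃ F : Ordinal.{0} → (↥a → Ordinal.{0}),
    (∀ α < lam.ord, ∀ x : ↥a, F α x < (x : Cardinal.{0}).ord) ∧
    (∀ α β, α < β → β < lam.ord → ltJ a J (F α) (F β)) ∧
    (∀ g : ↥a → Ordinal.{0}, (∀ x : ↥a, g x < (x : Cardinal.{0}).ord) →
      ∃ α < lam.ord, ltJ a J g (F α))

/-- `pcf_{θ-complete} a` : true cofinalities of `∏ a / J` over
`θ`-complete proper ideals `J` on `a`. -/
def pcfCompl (θ : Cardinal.{0}) (a : Set Cardinal.{0}) : Set Cardinal.{0} :=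
  {lam | ∃ J : Set (Set ↥a),
    IsIdealOn a J ∧ IsThetaComplete θ a J ∧ IsTcfIdeal a J lam}

/-!
A `θ`-complete proper ideal `J` on `a = ⋃_{i<α} a_i` with `α < θ` cannot contain every piece
`a_i`, since their union is all of `a`. On a `J`-positive piece `a_i` the ideal `J ↾ a_i` is a
`θ`-complete proper ideal, and a cofinal sequence in `∏ a / J` restricts to one in
`∏ a_i / (J ↾ a_i)`. Conversely an ideal `J'` on `a_i` pulls back to `{s | s ∩ a_i ∈ J'}` on `a`,
and functions on `a_i` extend to `a` by `0`, which is below every (nonzero) member of `a`.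
-/

universe u

section

variable {θ lam : Cardinal.{0}} {a b : Set Cardinal.{0}}

def restrictIdeal (h : b ⊆ a) (J : Set (Set ↥a)) : Set (Set ↥b) :=
  {s | inclusion h '' s ∈ J}

def extendIdeal (h : b ⊆ a) (J : Set (Set ↥b)) : Set (Set ↥a) :=
  {s | inclusion h ⁻¹' s ∈ J}

theorem IsIdealOn.restrictIdeal (h : b ⊆ a) {J : Set (Set ↥a)} (hJ : IsIdealOn a J)
    (hb : Subtype.val ⁻¹' b ∉ J) : IsIdealOn b (restrictIdeal h J) := by
  obtain ⟨hempty, hmono, hunion, -⟩ := hJ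
  refine ⟨?_, fun s t hst ht => hmono _ _ (image_mono hst) ht, fun s t hs ht => ?_, ?_⟩
  · change inclusion h '' ∅ ∈ J
    rwa [image_empty]
  · change inclusion h '' (s ∪ t) ∈ J
    rw [image_union]
    exact hunion _ _ hs ht
  · change inclusion h '' univ ∉ J
    rwa [image_univ, range_inclusion]

theorem IsIdealOn.extendIdeal (h : b ⊆ a) {J : Set (Set ↥b)} (hJ : IsIdealOn b J) :
    IsIdealOn a (extendIdeal h J) := by
  obtain ⟨hempty, hmono, hunion, hproper⟩ := hJ
  exact ⟨hempty, fun s t hst ht => hmono _ _ (preimage_mono hst) ht,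
    fun s t hs ht => hunion _ _ hs ht, hproper⟩

theorem IsThetaComplete.restrictIdeal (h : b ⊆ a) {J : Set (Set ↥a)}
    (hJ : IsThetaComplete θ a J) : IsThetaComplete θ b (restrictIdeal h J) := by
  intro A hA hcard
  change inclusion h '' ⋃₀ A ∈ J
  rw [image_sUnion]
  exact hJ _ (image_subset_iff.2 hA) (mk_image_le.trans_lt hcard)

theorem IsThetaComplete.extendIdeal (h : b ⊆ a) {J : Set (Set ↥b)}
    (hJ : IsThetaComplete θ b J) : IsThetaComplete θ a (extendIdeal h J) := by
  intro A hA hcard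
  change inclusion h ⁻¹' ⋃₀ A ∈ J
  rw [preimage_sUnion, ← sUnion_image]
  exact hJ _ (image_subset_iff.2 hA) (mk_image_le.trans_lt hcard)

theorem ltJ_restrictIdeal (h : b ⊆ a) {J : Set (Set ↥a)} (hJ : IsIdealOn a J)
    {f g : ↥a → Ordinal.{0}} (hfg : ltJ a J f g) :
    ltJ b (restrictIdeal h J) (f ∘ inclusion h) (g ∘ inclusion h) :=
  hJ.2.1 _ _ (by rintro _ ⟨y, hy, rfl⟩; exact hy) hfg

theorem ltJ_extendIdeal_iff (h : b ⊆ a) {J : Set (Set ↥b)} {f g : ↥a → Ordinal.{0}} :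
    ltJ a (extendIdeal h J) f g ↔ ltJ b J (f ∘ inclusion h) (g ∘ inclusion h) :=
  Iff.rfl

theorem extend_inclusion_lt_ord (h : b ⊆ a) {g : ↥b → Ordinal.{0}} {e : ↥a → Ordinal.{0}}
    (hg : ∀ y : ↥b, g y < (y : Cardinal.{0}).ord)
    (he : ∀ x : ↥a, e x < (x : Cardinal.{0}).ord) (x : ↥a) :
    Function.extend (inclusion h) g e x < (x : Cardinal.{0}).ord := by
  by_cases hx : ∃ y, inclusion h y = x
  · obtain ⟨y, rfl⟩ := hx
    rw [(inclusion_injective h).extend_apply]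
    exact hg y
  · rw [Function.extend_apply' _ _ _ hx]
    exact he x

/-- A function on `b` is extended to `a` by the first member `F 0` of the cofinal sequence. -/
theorem IsTcfIdeal.restrictIdeal (h : b ⊆ a) {J : Set (Set ↥a)} (hJ : IsIdealOn a J)
    (hT : IsTcfIdeal a J lam) : IsTcfIdeal b (restrictIdeal h J) lam := by
  obtain ⟨hlam, F, hFlt, hFinc, hFcof⟩ := hT
  have hF0 : ∀ x : ↥a, F 0 x < (x : Cardinal.{0}).ord := hFlt 0 (ord_pos.2 hlam.pos)
  refine ⟨hlam, fun β => F β ∘ inclusion h, fun β hβ y => hFlt β hβ _,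
    fun β γ hβγ hγ => ltJ_restrictIdeal h hJ (hFinc β γ hβγ hγ), fun g hg => ?_⟩
  obtain ⟨β, hβ, hlt⟩ := hFcof _ (extend_inclusion_lt_ord h hg hF0)
  refine ⟨β, hβ, ?_⟩
  simpa only [Function.extend_comp (inclusion_injective h)] using ltJ_restrictIdeal h hJ hlt

theorem IsTcfIdeal.extendIdeal (h : b ⊆ a) (ha : ∀ x ∈ a, x ≠ 0) {J : Set (Set ↥b)}
    (hT : IsTcfIdeal b J lam) : IsTcfIdeal a (extendIdeal h J) lam := by
  obtain ⟨hlam, F, hFlt, hFinc, hFcof⟩ := hT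
  have hzero : ∀ x : ↥a, (0 : ↥a → Ordinal.{0}) x < (x : Cardinal.{0}).ord :=
    fun x => ord_pos.2 (pos_iff_ne_zero.2 (ha x x.2))
  have hcomp : ∀ β, Function.extend (inclusion h) (F β) 0 ∘ inclusion h = F β :=
    fun β => Function.extend_comp (inclusion_injective h) _ _
  refine ⟨hlam, fun β => Function.extend (inclusion h) (F β) 0,
    fun β hβ => extend_inclusion_lt_ord h (hFlt β hβ) hzero, fun β γ hβγ hγ => ?_, fun g hg => ?_⟩
  · rw [ltJ_extendIdeal_iff, hcomp, hcomp]
    exact hFinc β γ hβγ hγ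
  · obtain ⟨β, hβ, hlt⟩ := hFcof (g ∘ inclusion h) fun y => hg _
    exact ⟨β, hβ, by rwa [ltJ_extendIdeal_iff, hcomp]⟩

theorem mem_pcfCompl_of_notMem (h : b ⊆ a) {J : Set (Set ↥a)} (hJ : IsIdealOn a J)
    (hJc : IsThetaComplete θ a J) (hT : IsTcfIdeal a J lam) (hb : Subtype.val ⁻¹' b ∉ J) :
    lam ∈ pcfCompl θ b :=
  ⟨_, hJ.restrictIdeal h hb, hJc.restrictIdeal h, hT.restrictIdeal h hJ⟩

theorem pcfCompl_mono (h : b ⊆ a) (ha : ∀ x ∈ a, x ≠ 0) : pcfCompl θ b ⊆ pcfCompl θ a :=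
  fun _ ⟨_, hJ, hJc, hT⟩ => ⟨_, hJ.extendIdeal h, hJc.extendIdeal h, hT.extendIdeal h ha⟩

theorem IsThetaComplete.exists_notMem_of_iUnion_eq_univ {ι : Type u} {J : Set (Set ↥a)}
    (hJc : IsThetaComplete θ a J) (hJ : IsIdealOn a J) {s : ι → Set ↥a}
    (hs : ⋃ i, s i = Set.univ) (hι : lift.{1} #ι < lift θ) : ∃ i, s i ∉ J := by
  by_contra! hall
  apply hJ.2.2.2
  rw [← hs, ← sUnion_range]
  refine hJc _ (range_subset_iff.2 hall) ?_
  refine lift_lt.{1, u}.1 (mk_range_le_lift.trans_lt ?_)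
  rwa [lift_lift]

end

theorem pcfCompl_iUnion_general (θ : Cardinal.{0})
    (α : Ordinal.{0}) (hα : α < θ.ord)
    (as : Ordinal.{0} → Set Cardinal.{0})
    (hreg : ∀ i < α, ∀ x ∈ as i, x.IsRegular) :
    pcfCompl θ (⋃ i ∈ Set.Iio α, as i) =
      ⋃ i ∈ Set.Iio α, pcfCompl θ (as i) := by
  have hsub : ∀ i < α, as i ⊆ ⋃ j ∈ Iio α, as j := fun i hi => subset_biUnion_of_mem (u := as) hi
  have hne : ∀ x ∈ ⋃ i ∈ Iio α, as i, x ≠ 0 := by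
    simp only [mem_iUnion₂, mem_Iio]
    rintro x ⟨i, hi, hx⟩
    exact (hreg i hi x hx).pos.ne'
  have hcover : ⋃ i : Iio α, Subtype.val ⁻¹' as i = (univ : Set ↥(⋃ i ∈ Iio α, as i)) := by
    ext ⟨x, hx⟩
    simpa only [mem_iUnion₂, mem_iUnion, mem_preimage, Subtype.exists, exists_prop, mem_univ,
      iff_true] using hx
  have hcard : lift.{1} #(Iio α) < lift.{1} θ := by
    rw [mk_Iio_ordinal, lift_id, lift_lt]
    exact lt_ord.1 hα
  ext lam
  rw [mem_iUnion₂]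
  constructor
  · rintro ⟨J, hJ, hJc, hT⟩
    obtain ⟨⟨i, hi⟩, hpos⟩ := hJc.exists_notMem_of_iUnion_eq_univ hJ hcover hcard
    exact ⟨i, hi, mem_pcfCompl_of_notMem (hsub i hi) hJ hJc hT hpos⟩
  · rintro ⟨i, hi, hlam⟩
    exact pcfCompl_mono (hsub i hi) hne hlam

/-- for `α < θ` (θ regular), `θ`-complete pcf commutes with
unions of `α` many sets: `pcf_{θ-complete}(⋃_{i<α} a_i) =
⋃_{i<α} pcf_{θ-complete}(a_i)`. -/
theorem pcfCompl_iUnion (θ : Cardinal.{0}) (hθ : θ.IsRegular)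
    (α : Ordinal.{0}) (hα : α < θ.ord)
    (as : Ordinal.{0} → Set Cardinal.{0})
    (hreg : ∀ i < α, ∀ x ∈ as i, x.IsRegular)
    (hsz : #(⋃ i ∈ Set.Iio α, as i) <
      Cardinal.lift.{1,0} (sInf (⋃ i ∈ Set.Iio α, as i))) :
    pcfCompl θ (⋃ i ∈ Set.Iio α, as i) =
      ⋃ i ∈ Set.Iio α, pcfCompl θ (as i) :=
  pcfCompl_iUnion_general θ α hα as hreg
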